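/- Let (z,w) be an admissible pair with a measure-preserving map P̃ : Ω → T satisfying z(x) - w(P̃(x)) = (β² - |x - P̃(x)|²)/(2β) a.e. on Ω. Then for every measure-preserving map P : Ω → T (i.e., ∫_Ω h(P(x)) I dx = ∫_T h L dp for all continuous h), we have ∫_Ω |x - P̃(x)|² I(x) dx ≤ ∫_Ω |x - P(x)|² I(x) dx. -/

import Mathlib

/-!
Weak Kantorovich duality. Admissibility says `‖x - p‖² ≥ β² - 2β (z x - w p)` on `Ω × T`,
with equality at `p = P̃ x`. Hence, for any plan `P`,
`‖x - P̃ x‖² ≤ ‖x - P x‖² + 2β w (P̃ x) - 2β w (P x)`.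
Multiplying by `I` and integrating, the `w` terms cancel, because both maps push `I` forward to `L`
and `w` (extended continuously to the whole space by Tietze) is a legitimate test function.
-/

open MeasureTheory Set

theorem ContinuousOn.exists_continuous_eqOn {X : Type*} [TopologicalSpace X] [NormalSpace X]
    {s : Set X} {f : X → ℝ} (hs : IsClosed s) (hf : ContinuousOn f s) :
    ∃ F : X → ℝ, Continuous F ∧ EqOn F f s := by
  obtain ⟨F, hF⟩ := ContinuousMap.exists_restrict_eq hs ⟨s.domRestrict f, hf.domRestrict⟩
  exact ⟨F, F.continuous, fun x hx => congrFun (congrArg ContinuousMap.toFun hF) ⟨x, hx⟩⟩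

theorem sq_dist_le_of_admissible {β a b c d₁ d₂ : ℝ} (hβ : 0 < β)
    (heq : a - b = (β ^ 2 - d₁) / (2 * β)) (hadm : a - c ≥ (β ^ 2 - d₂) / (2 * β)) :
    d₁ ≤ d₂ + 2 * β * b - 2 * β * c := by
  have h2β : 0 < 2 * β := by positivity
  rw [eq_div_iff h2β.ne'] at heq
  rw [ge_iff_le, div_le_iff₀ h2β] at hadm
  linarith

theorem IntegrableOn.continuous_comp_mul {α γ : Type*} [TopologicalSpace α] [MeasurableSpace α]
    [BorelSpace α] [T2Space α] [TopologicalSpace γ] [MeasurableSpace γ] [BorelSpace γ]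
    [SecondCountableTopology γ] {μ : Measure α} {Ω : Set α} {T : Set γ} {F : α × γ → ℝ}
    {Q : α → γ} {I : α → ℝ} (hI : IntegrableOn I Ω μ) (hF : Continuous F) (hΩ : IsCompact Ω)
    (hT : IsCompact T) (hQ : Measurable Q) (hQT : MapsTo Q Ω T) :
    IntegrableOn (fun x => F (x, Q x) * I x) Ω μ := by
  obtain ⟨C, hC⟩ := (hΩ.prod hT).exists_bound_of_continuousOn hF.continuousOn
  refine hI.bdd_mul (c := C)
    (hF.measurable.comp (measurable_id.prodMk hQ)).aestronglyMeasurable ?_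
  filter_upwards [ae_restrict_mem hΩ.measurableSet] with x hx
  exact hC (x, Q x) ⟨hx, hQT hx⟩

theorem integral_mul_le_of_le_add_sub {α : Type*} [MeasurableSpace α] {μ : Measure α}
    {I c₁ c₂ φ₁ φ₂ : α → ℝ} (hI : ∀ᵐ x ∂μ, 0 ≤ I x)
    (hle : ∀ᵐ x ∂μ, c₁ x ≤ c₂ x + φ₁ x - φ₂ x)
    (hc₁ : Integrable (fun x => c₁ x * I x) μ) (hc₂ : Integrable (fun x => c₂ x * I x) μ)
    (hφ₁ : Integrable (fun x => φ₁ x * I x) μ) (hφ₂ : Integrable (fun x => φ₂ x * I x) μ)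
    (hφ : ∫ x, φ₁ x * I x ∂μ = ∫ x, φ₂ x * I x ∂μ) :
    ∫ x, c₁ x * I x ∂μ ≤ ∫ x, c₂ x * I x ∂μ := by
  have hmono : ∀ᵐ x ∂μ, c₁ x * I x ≤ c₂ x * I x + (φ₁ x * I x - φ₂ x * I x) := by
    filter_upwards [hI, hle] with x hIx hx
    linarith [mul_le_mul_of_nonneg_right hx hIx]
  have hφ₁₂ : Integrable (fun x => φ₁ x * I x - φ₂ x * I x) μ := hφ₁.sub hφ₂
  calc ∫ x, c₁ x * I x ∂μ
      ≤ ∫ x, c₂ x * I x + (φ₁ x * I x - φ₂ x * I x) ∂μ :=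
        integral_mono_ae hc₁ (hc₂.add hφ₁₂) hmono
    _ = ∫ x, c₂ x * I x ∂μ := by
        rw [integral_add hc₂ hφ₁₂, integral_sub hφ₁ hφ₂, hφ, sub_self, add_zero]

theorem stmt_14_general {n : ℕ} (Ω T : Set (EuclideanSpace ℝ (Fin n)))
    (hΩc : IsCompact Ω) (hTc : IsCompact T)
    (β : ℝ) (hβ : 0 < β)
    (I L : EuclideanSpace ℝ (Fin n) → ℝ)
    (hI0 : ∀ x ∈ Ω, 0 ≤ I x)
    (hIint : IntegrableOn I Ω)
    (z w : EuclideanSpace ℝ (Fin n) → ℝ)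
    (hwc : ContinuousOn w T)
    (hadm : ∀ x ∈ Ω, ∀ p ∈ T, z x - w p ≥ (β ^ 2 - ‖x - p‖ ^ 2) / (2 * β))
    (Pt : EuclideanSpace ℝ (Fin n) → EuclideanSpace ℝ (Fin n))
    (hPtm : Measurable Pt) (hPtT : ∀ x ∈ Ω, Pt x ∈ T)
    (heq : ∀ᵐ x ∂(volume.restrict Ω),
      z x - w (Pt x) = (β ^ 2 - ‖x - Pt x‖ ^ 2) / (2 * β))
    (hPtplan : ∀ h : EuclideanSpace ℝ (Fin n) → ℝ, Continuous h →
      ∫ x in Ω, h (Pt x) * I x = ∫ p in T, h p * L p) :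
    ∀ P : EuclideanSpace ℝ (Fin n) → EuclideanSpace ℝ (Fin n), Measurable P →
      (∀ x ∈ Ω, P x ∈ T) →
      (∀ h : EuclideanSpace ℝ (Fin n) → ℝ, Continuous h →
        ∫ x in Ω, h (P x) * I x = ∫ p in T, h p * L p) →
      (∫ x in Ω, ‖x - Pt x‖ ^ 2 * I x) ≤ ∫ x in Ω, ‖x - P x‖ ^ 2 * I x := by
  intro P hPm hPT hPplan
  have hΩm : MeasurableSet Ω := hΩc.measurableSet
  obtain ⟨W, hW, hWw⟩ := hwc.exists_continuous_eqOn hTc.isClosed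
  set φ := fun p => 2 * β * W p
  have hφ : Continuous φ := continuous_const.mul hW
  have hcost : Continuous fun y : EuclideanSpace ℝ (Fin n) × EuclideanSpace ℝ (Fin n) =>
      ‖y.1 - y.2‖ ^ 2 := by
    fun_prop
  refine integral_mul_le_of_le_add_sub (φ₁ := fun x => φ (Pt x)) (φ₂ := fun x => φ (P x))
    (ae_restrict_of_forall_mem hΩm hI0) ?_
    (IntegrableOn.continuous_comp_mul hIint hcost hΩc hTc hPtm hPtT)
    (IntegrableOn.continuous_comp_mul hIint hcost hΩc hTc hPm hPT)
    (IntegrableOn.continuous_comp_mul hIint (hφ.comp continuous_snd) hΩc hTc hPtm hPtT)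
    (IntegrableOn.continuous_comp_mul hIint (hφ.comp continuous_snd) hΩc hTc hPm hPT)
    (by rw [hPtplan φ hφ, hPplan φ hφ])
  filter_upwards [ae_restrict_mem hΩm, heq] with x hx hxeq
  have hadmP := hadm x hx _ (hPT x hx)
  rw [← hWw (hPtT x hx)] at hxeq
  rw [← hWw (hPT x hx)] at hadmP
  exact sq_dist_le_of_admissible hβ hxeq hadmP

theorem stmt_14 {n : ℕ} (Ω T : Set (EuclideanSpace ℝ (Fin n)))
    (hΩc : IsCompact Ω) (hΩne : Ω.Nonempty) (hTc : IsCompact T) (hTne : T.Nonempty)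
    (β : ℝ) (hβ : 0 < β)
    (I L : EuclideanSpace ℝ (Fin n) → ℝ)
    (hI0 : ∀ x ∈ Ω, 0 ≤ I x) (hL0 : ∀ p ∈ T, 0 ≤ L p)
    (hIint : IntegrableOn I Ω) (hLint : IntegrableOn L T)
    (hmass : ∫ x in Ω, I x = ∫ p in T, L p)
    (z w : EuclideanSpace ℝ (Fin n) → ℝ)
    (hzc : ContinuousOn z Ω) (hwc : ContinuousOn w T)
    (hadm : ∀ x ∈ Ω, ∀ p ∈ T, z x - w p ≥ (β ^ 2 - ‖x - p‖ ^ 2) / (2 * β))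
    (Pt : EuclideanSpace ℝ (Fin n) → EuclideanSpace ℝ (Fin n))
    (hPtm : Measurable Pt) (hPtT : ∀ x ∈ Ω, Pt x ∈ T)
    (heq : ∀ᵐ x ∂(volume.restrict Ω),
      z x - w (Pt x) = (β ^ 2 - ‖x - Pt x‖ ^ 2) / (2 * β))
    (hPtplan : ∀ h : EuclideanSpace ℝ (Fin n) → ℝ, Continuous h →
      ∫ x in Ω, h (Pt x) * I x = ∫ p in T, h p * L p) :
    ∀ P : EuclideanSpace ℝ (Fin n) → EuclideanSpace ℝ (Fin n), Measurable P →
      (∀ x ∈ Ω, P x ∈ T) →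
      (∀ h : EuclideanSpace ℝ (Fin n) → ℝ, Continuous h →
        ∫ x in Ω, h (P x) * I x = ∫ p in T, h p * L p) →
      (∫ x in Ω, ‖x - Pt x‖ ^ 2 * I x) ≤ ∫ x in Ω, ‖x - P x‖ ^ 2 * I x :=
  stmt_14_general Ω T hΩc hTc β hβ I L hI0 hIint z w hwc hadm Pt hPtm hPtT heq hPtplan
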